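/- arXiv:1706.03955 — 3 statements merged into one kernel-verified Lean document; each statement's English description precedes it below -/
import Mathlib

section
/- Extension to Markov kernels: Let M_i : (Ω,𝒜,P) ⇝ (Ω_i,𝒜_i), i=1,2,3, be Markov kernels (with spaces regular enough that conditional distributions of kernels exist). If M1 and M2 are conditionally independent given M3, then M1 and M2 are P-independent if and only if the kernels P^{M1|M3} and P^{M2|M3} are independent with respect to P^{M3}. -/
/-!
Taking `A2 = univ` in the defining identity of a conditional distribution shows that
`P^{M} = (P^{M3})^{L}` whenever `L = P^{M|M3}`. Applied to `M1`, `M2` and `M1 ×ₖ M2`, and combined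
with `L12 = L1 ×ₖ L2` a.s., both independence statements compare the same two measures.
-/

open MeasureTheory ProbabilityTheory

/-- The image (probability distribution) of a Markov kernel `M` under a measure `Q`:
`Q^M (A) = ∫ M(ω, A) dQ(ω)`. -/
noncomputable def kernelImage {α β : Type*} [MeasurableSpace α] [MeasurableSpace β]
    (Q : Measure α) (M : ProbabilityTheory.Kernel α β) : Measure β :=
  Q.bind (fun a => M a)

/-- Two Markov kernels `M1, M2` on a probability space `(α, Q)` are `Q`-independent if the
image of their diagonal product is the product of their images. -/
def KernelIndep {α β γ : Type*} [MeasurableSpace α] [MeasurableSpace β] [MeasurableSpace γ]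
    (Q : Measure α) (M1 : ProbabilityTheory.Kernel α β) (M2 : ProbabilityTheory.Kernel α γ) :
    Prop :=
  kernelImage Q (M1 ×ₖ M2) = (kernelImage Q M1).prod (kernelImage Q M2)

/-- `L : Ω2 ⇝ Ω1` is a (regular) conditional distribution of the kernel `M1` given the kernel
`M2` on the probability space `(Ω, P)`:
`∫ M1(ω,A1)·M2(ω,A2) dP(ω) = ∫_{A2} L(ω2,A1) dP^{M2}(ω2)` for all measurable `A1, A2`. -/
def IsCondDistribKernel {Ω Ω1 Ω2 : Type*} [MeasurableSpace Ω] [MeasurableSpace Ω1]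
    [MeasurableSpace Ω2] (P : Measure Ω) (M1 : ProbabilityTheory.Kernel Ω Ω1)
    (M2 : ProbabilityTheory.Kernel Ω Ω2) (L : ProbabilityTheory.Kernel Ω2 Ω1) : Prop :=
  ∀ A1 A2 : Set _, MeasurableSet A1 → MeasurableSet A2 →
    ∫⁻ ω, M1 ω A1 * M2 ω A2 ∂P = ∫⁻ ω2 in A2, L ω2 A1 ∂(kernelImage P M2)

lemma kernelImage_eq_of_isCondDistribKernel {Ω Ω3 β : Type*} [MeasurableSpace Ω]
    [MeasurableSpace Ω3] [MeasurableSpace β] {P : Measure Ω} {M : Kernel Ω β}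
    {M3 : Kernel Ω Ω3} [IsMarkovKernel M3] {L : Kernel Ω3 β}
    (h : IsCondDistribKernel P M M3 L) :
    kernelImage P M = kernelImage (kernelImage P M3) L := by
  ext s hs
  have hs_univ := h s Set.univ hs MeasurableSet.univ
  simp only [measure_univ, mul_one, Measure.restrict_univ] at hs_univ
  rw [kernelImage, kernelImage, Measure.bind_apply hs M.measurable.aemeasurable,
    Measure.bind_apply hs L.measurable.aemeasurable, hs_univ]

lemma kernelImage_congr_ae {α β : Type*} [MeasurableSpace α] [MeasurableSpace β]
    {Q : Measure α} {K K' : Kernel α β} (h : ∀ᵐ a ∂Q, K a = K' a) :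
    kernelImage Q K = kernelImage Q K' :=
  Measure.bind_congr_right h

theorem stmt12_general {Ω Ω1 Ω2 Ω3 : Type*} [MeasurableSpace Ω] [MeasurableSpace Ω1]
    [MeasurableSpace Ω2] [MeasurableSpace Ω3]
    (P : Measure Ω)
    (M1 : ProbabilityTheory.Kernel Ω Ω1) (M2 : ProbabilityTheory.Kernel Ω Ω2)
    (M3 : ProbabilityTheory.Kernel Ω Ω3)
    [IsMarkovKernel M3]
    (L1 : ProbabilityTheory.Kernel Ω3 Ω1) (L2 : ProbabilityTheory.Kernel Ω3 Ω2)
    (L12 : ProbabilityTheory.Kernel Ω3 (Ω1 × Ω2))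
    (hL1 : IsCondDistribKernel P M1 M3 L1)
    (hL2 : IsCondDistribKernel P M2 M3 L2)
    (hL12 : IsCondDistribKernel P (M1 ×ₖ M2) M3 L12)
    (hci : ∀ᵐ ω3 ∂(kernelImage P M3), L12 ω3 = (L1 ×ₖ L2) ω3) :
    KernelIndep P M1 M2 ↔ KernelIndep (kernelImage P M3) L1 L2 := by
  rw [KernelIndep, KernelIndep, kernelImage_eq_of_isCondDistribKernel hL1,
    kernelImage_eq_of_isCondDistribKernel hL2, kernelImage_eq_of_isCondDistribKernel hL12,
    kernelImage_congr_ae hci]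

/-- Extension of the main theorem to Markov kernels: if `M1` and `M2` are conditionally
independent given `M3` (the conditional distribution of `M1 ×ₖ M2` given `M3` agrees a.s. with
the product of the conditional distributions of `M1` and `M2` given `M3`), then `M1` and `M2`
are `P`-independent iff the kernels `P^{M1|M3}` and `P^{M2|M3}` are `P^{M3}`-independent. -/
theorem stmt12 {Ω Ω1 Ω2 Ω3 : Type*} [MeasurableSpace Ω] [MeasurableSpace Ω1]
    [MeasurableSpace Ω2] [MeasurableSpace Ω3]
    (P : Measure Ω) [IsProbabilityMeasure P]
    (M1 : ProbabilityTheory.Kernel Ω Ω1) (M2 : ProbabilityTheory.Kernel Ω Ω2)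
    (M3 : ProbabilityTheory.Kernel Ω Ω3)
    [IsMarkovKernel M1] [IsMarkovKernel M2] [IsMarkovKernel M3]
    (L1 : ProbabilityTheory.Kernel Ω3 Ω1) (L2 : ProbabilityTheory.Kernel Ω3 Ω2)
    (L12 : ProbabilityTheory.Kernel Ω3 (Ω1 × Ω2))
    [IsMarkovKernel L1] [IsMarkovKernel L2] [IsMarkovKernel L12]
    (hL1 : IsCondDistribKernel P M1 M3 L1)
    (hL2 : IsCondDistribKernel P M2 M3 L2)
    (hL12 : IsCondDistribKernel P (M1 ×ₖ M2) M3 L12)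
    (hci : ∀ᵐ ω3 ∂(kernelImage P M3), L12 ω3 = (L1 ×ₖ L2) ω3) :
    KernelIndep P M1 M2 ↔ KernelIndep (kernelImage P M3) L1 L2 :=
  stmt12_general P M1 M2 M3 L1 L2 L12 hL1 hL2 hL12 hci
end

section
/- Generalization of the main theorem: Let X_i, i=1,2,3,4 be random variables with X4 = f∘X3 for a measurable f : Ω3 → Ω4. If X1 and X2 are conditionally independent given X3, then X1 and X2 are conditionally independent given X4 if and only if the kernels P^{X1|X3} and P^{X2|X3} are conditionally independent given P^{X4|X3} with respect to the measure P^{X3}. -/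
open MeasureTheory ProbabilityTheory
open scoped ENNReal

/-!
Because `X4 = f ∘ X3` is a function of `X3`, the kernel `P^{X4|X3}` is a.e. the Dirac kernel
at `f`. Hence, for a kernel `M` that is a version of `P^{Y|X3}`, the integral
`∫ M(ω3, A1) P^{X4|X3}(ω3, A2) dP^{X3}` is the joint law of `(X4, Y)` on `A2 × A1`, while the
`P^{X3}`-image of `P^{X4|X3}` is `P^{X4}`: a conditional distribution of `M` given `P^{X4|X3}`
is therefore a version of `P^{Y|X4}`. Applied to `X1`, `X2` and, thanks to `X1 ⟂ X2 | X3`, to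
`(X1, X2)`, this identifies `L1`, `L2`, `L12` with the conditional distributions given `X4`, and
the two sides of the equivalence become the same statement.
-/

lemma ProbabilityTheory.Kernel.prod_congr_ae {α β γ : Type*} [MeasurableSpace α]
    [MeasurableSpace β] [MeasurableSpace γ] {μ : Measure α}
    {κ κ' : Kernel α β} {η η' : Kernel α γ} [IsSFiniteKernel κ] [IsSFiniteKernel κ']
    [IsSFiniteKernel η] [IsSFiniteKernel η'] (hκ : κ =ᵐ[μ] κ') (hη : η =ᵐ[μ] η') :
    κ ×ₖ η =ᵐ[μ] κ' ×ₖ η' := by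
  filter_upwards [hκ, hη] with a haκ haη
  rw [Kernel.prod_apply, Kernel.prod_apply, haκ, haη]

section

variable {Ω β γ Ω' Ω'' : Type*} [MeasurableSpace Ω] [MeasurableSpace β] [MeasurableSpace γ]
  [MeasurableSpace Ω'] [StandardBorelSpace Ω'] [Nonempty Ω']
  [MeasurableSpace Ω''] [StandardBorelSpace Ω''] [Nonempty Ω'']
  {P : Measure Ω} [IsFiniteMeasure P]

lemma kernelImage_map_condDistrib {X : Ω → β} {Y : Ω → Ω'} (hX : AEMeasurable X P)
    (hY : AEMeasurable Y P) : kernelImage (P.map X) (condDistrib Y X P) = P.map Y :=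
  condDistrib_comp_map hX hY

lemma lintegral_mul_condDistrib_comp_self (X : Ω → β) {f : β → Ω'} (hf : Measurable f)
    (M : Kernel β γ) (A : Set γ) {B : Set Ω'} (hB : MeasurableSet B) :
    ∫⁻ b, M b A * condDistrib (f ∘ X) X P b B ∂(P.map X) = ∫⁻ b in f ⁻¹' B, M b A ∂(P.map X) := by
  rw [← lintegral_indicator (hf hB)]
  refine lintegral_congr_ae ?_
  filter_upwards [condDistrib_comp_self X hf (μ := P)] with b hb
  by_cases hfb : f b ∈ B <;> simp [hb, Kernel.deterministic_apply' hf _ hB, hfb]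

lemma condDistrib_comp_ae_eq_of_isCondDistribKernel {X : Ω → β} {Y : Ω → Ω''} {f : β → Ω'}
    (hX : Measurable X) (hY : Measurable Y) (hf : Measurable f)
    {M : Kernel β Ω''} (hM : M =ᵐ[P.map X] condDistrib Y X P)
    {L : Kernel Ω' Ω''} [IsFiniteKernel L]
    (hL : IsCondDistribKernel (P.map X) M (condDistrib (f ∘ X) X P) L) :
    condDistrib Y (f ∘ X) P =ᵐ[P.map (f ∘ X)] L := by
  refine condDistrib_ae_eq_of_measure_eq_compProd _ hY.aemeasurable (Measure.ext_prod ?_)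
  intro s t hs ht
  calc P.map (fun ω => ((f ∘ X) ω, Y ω)) (s ×ˢ t)
      = P.map (fun ω => (X ω, Y ω)) ((f ⁻¹' s) ×ˢ t) := by
        rw [Measure.map_apply ((hf.comp hX).prodMk hY) (hs.prod ht),
          Measure.map_apply (hX.prodMk hY) ((hf hs).prod ht)]
        rfl
    _ = ∫⁻ b in f ⁻¹' s, condDistrib Y X P b t ∂(P.map X) := by
        rw [← compProd_map_condDistrib hY.aemeasurable, Measure.compProd_apply_prod (hf hs) ht]
    _ = ∫⁻ b, M b t * condDistrib (f ∘ X) X P b s ∂(P.map X) := by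
        rw [lintegral_mul_condDistrib_comp_self X hf M t hs]
        exact setLIntegral_congr_fun_ae (hf hs)
          (hM.mono fun b hb _ => congrFun (congrArg _ hb.symm) t)
    _ = (P.map (f ∘ X) ⊗ₘ L) (s ×ˢ t) := by
        rw [hL t s ht hs, kernelImage_map_condDistrib hX.aemeasurable (hf.comp hX).aemeasurable,
          Measure.compProd_apply_prod hs ht]

end

/-- Generalization of the main theorem: if `X4 = f ∘ X3` and `X1 ⟂ X2 | X3`, then
`X1 ⟂ X2 | X4` iff the kernels `P^{X1|X3}` and `P^{X2|X3}` are conditionally independent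
given `P^{X4|X3}` with respect to `P^{X3}`. -/
theorem stmt16 {Ω Ω1 Ω2 Ω3 Ω4 : Type*} [MeasurableSpace Ω] [MeasurableSpace Ω1]
    [MeasurableSpace Ω2] [MeasurableSpace Ω3] [MeasurableSpace Ω4]
    [StandardBorelSpace Ω1] [Nonempty Ω1] [StandardBorelSpace Ω2] [Nonempty Ω2]
    [StandardBorelSpace Ω4] [Nonempty Ω4]
    (P : Measure Ω) [IsProbabilityMeasure P]
    (X1 : Ω → Ω1) (X2 : Ω → Ω2) (X3 : Ω → Ω3) (X4 : Ω → Ω4) (f : Ω3 → Ω4)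
    (hX1 : Measurable X1) (hX2 : Measurable X2) (hX3 : Measurable X3) (hf : Measurable f)
    (hX4 : X4 = f ∘ X3)
    (hci : ∀ᵐ ω3 ∂(P.map X3),
      condDistrib (fun ω => (X1 ω, X2 ω)) X3 P ω3
        = (condDistrib X1 X3 P ×ₖ condDistrib X2 X3 P) ω3)
    (L1 : ProbabilityTheory.Kernel Ω4 Ω1) (L2 : ProbabilityTheory.Kernel Ω4 Ω2)
    (L12 : ProbabilityTheory.Kernel Ω4 (Ω1 × Ω2))
    [IsMarkovKernel L1] [IsMarkovKernel L2] [IsMarkovKernel L12]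
    (hL1 : IsCondDistribKernel (P.map X3) (condDistrib X1 X3 P) (condDistrib X4 X3 P) L1)
    (hL2 : IsCondDistribKernel (P.map X3) (condDistrib X2 X3 P) (condDistrib X4 X3 P) L2)
    (hL12 : IsCondDistribKernel (P.map X3)
      (condDistrib X1 X3 P ×ₖ condDistrib X2 X3 P) (condDistrib X4 X3 P) L12) :
    (∀ᵐ ω4 ∂(P.map X4),
        condDistrib (fun ω => (X1 ω, X2 ω)) X4 P ω4
          = (condDistrib X1 X4 P ×ₖ condDistrib X2 X4 P) ω4)
      ↔ (∀ᵐ ω4 ∂(kernelImage (P.map X3) (condDistrib X4 X3 P)),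
          L12 ω4 = (L1 ×ₖ L2) ω4) := by
  subst hX4
  have h1 := condDistrib_comp_ae_eq_of_isCondDistribKernel hX3 hX1 hf (ae_eq_refl _) hL1
  have h2 := condDistrib_comp_ae_eq_of_isCondDistribKernel hX3 hX2 hf (ae_eq_refl _) hL2
  have h12 := condDistrib_comp_ae_eq_of_isCondDistribKernel hX3 (hX1.prodMk hX2) hf
    (hci.mono fun _ => Eq.symm) hL12
  rw [kernelImage_map_condDistrib hX3.aemeasurable (hf.comp hX3).aemeasurable]
  exact h12.congr_left.trans (Kernel.prod_congr_ae h1 h2).congr_right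
end

section
/- For a trivariate centered Gaussian vector (X1,X2,X3) with correlations ρ_{ij}, the kernels P^{X1|X3} and P^{X2|X3} are P^{X3}-independent if ρ_{13}=0 or ρ_{23}=0; in particular, choosing ρ_{23}=0 and ρ_{13}≠0 yields kernels P^{X1|X3}, P^{X2|X3} that are P^{X3}-independent while X1 and X3 are not independent. -/
/-! If `ρ13 = 0` (resp. `ρ23 = 0`), the Gaussian conditional law of `X1` (resp. `X2`) given `X3`
does not depend on `x3`. A kernel that is `Q`-a.e. equal to a constant measure `μ` is
`Q`-independent of any other kernel `M`: the product kernel is then a.e. `μ × M`, whose image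
is `μ × Q^M`. On the other hand, if `X1` and `X3` were independent then
`E[X1 X3] = E[X1] E[X3] = 0`, contradicting `Cov(X1, X3) = ρ13 σ1 σ3 ≠ 0`. -/

open MeasureTheory ProbabilityTheory
open scoped ENNReal

section KernelIndep

variable {α β γ : Type*} [MeasurableSpace α] [MeasurableSpace β] [MeasurableSpace γ]
  {Q : Measure α}

lemma kernelImage_eq_comp (M : Kernel α β) : kernelImage Q M = M ∘ₘ Q := rfl

lemma kernelImage_of_ae_eq_const [IsProbabilityMeasure Q] {M : Kernel α β} {ν : Measure β}
    (h : ∀ᵐ a ∂Q, M a = ν) : kernelImage Q M = ν := by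
  rw [kernelImage_eq_comp, Measure.comp_congr (κ := M) (η := Kernel.const α ν) h,
    Measure.const_comp, measure_univ, one_smul]

lemma kernelImage_prod_const [SFinite Q] (M : Kernel α β) [IsSFiniteKernel M]
    (ν : Measure γ) [SFinite ν] :
    kernelImage Q (M ×ₖ Kernel.const α ν) = (kernelImage Q M).prod ν := by
  rw [kernelImage_eq_comp, kernelImage_eq_comp, Measure.comp_eq_comp_const_apply,
    Kernel.prod_const_comp, Kernel.prod_apply, Kernel.const_apply,
    ← Measure.comp_eq_comp_const_apply]

lemma kernelImage_const_prod [SFinite Q] (μ : Measure β) [SFinite μ]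
    (M : Kernel α γ) [IsSFiniteKernel M] :
    kernelImage Q (Kernel.const α μ ×ₖ M) = μ.prod (kernelImage Q M) := by
  rw [kernelImage_eq_comp, kernelImage_eq_comp, Measure.comp_eq_comp_const_apply,
    Kernel.const_prod_comp, Kernel.prod_apply, Kernel.const_apply,
    ← Measure.comp_eq_comp_const_apply]

variable [IsProbabilityMeasure Q]

lemma kernelIndep_of_ae_eq_const_left {M1 : Kernel α β} [IsSFiniteKernel M1] {M2 : Kernel α γ}
    [IsSFiniteKernel M2] {μ : Measure β} [SFinite μ] (h : ∀ᵐ a ∂Q, M1 a = μ) :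
    KernelIndep Q M1 M2 := by
  have hprod : ∀ᵐ a ∂Q, (M1 ×ₖ M2) a = (Kernel.const α μ ×ₖ M2) a := by
    filter_upwards [h] with a ha
    rw [Kernel.prod_apply, Kernel.prod_apply, ha, Kernel.const_apply]
  rw [KernelIndep, kernelImage_of_ae_eq_const h, kernelImage_eq_comp, Measure.comp_congr hprod,
    ← kernelImage_eq_comp, kernelImage_const_prod]

lemma kernelIndep_of_ae_eq_const_right {M1 : Kernel α β} [IsSFiniteKernel M1] {M2 : Kernel α γ}
    [IsSFiniteKernel M2] {ν : Measure γ} [SFinite ν] (h : ∀ᵐ a ∂Q, M2 a = ν) :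
    KernelIndep Q M1 M2 := by
  have hprod : ∀ᵐ a ∂Q, (M1 ×ₖ M2) a = (M1 ×ₖ Kernel.const α ν) a := by
    filter_upwards [h] with a ha
    rw [Kernel.prod_apply, Kernel.prod_apply, ha, Kernel.const_apply]
  rw [KernelIndep, kernelImage_of_ae_eq_const h, kernelImage_eq_comp, Measure.comp_congr hprod,
    ← kernelImage_eq_comp, kernelImage_prod_const]

end KernelIndep

lemma not_indepFun_of_integral_mul_ne_zero {Ω : Type*} [MeasurableSpace Ω] {P : Measure Ω}
    {X Y : Ω → ℝ} (hX : AEStronglyMeasurable X P) (hY : AEStronglyMeasurable Y P)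
    (hX0 : ∫ ω, X ω ∂P = 0) (hXY : ∫ ω, X ω * Y ω ∂P ≠ 0) : ¬ IndepFun X Y P := by
  intro hind
  have hprod := hind.integral_mul_eq_mul_integral hX hY
  rw [hX0, zero_mul] at hprod
  exact hXY hprod

theorem stmt19_general {Ω : Type*} [MeasurableSpace Ω] (P : Measure Ω) [IsProbabilityMeasure P]
    (X1 X2 X3 : Ω → ℝ) (hX1 : Measurable X1) (hX3 : Measurable X3)
    (σ1 σ2 σ3 : ℝ) (hσ1 : 0 < σ1) (hσ3 : 0 < σ3)
    (ρ13 ρ23 : ℝ)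
    -- Gaussian regular conditional distributions of `X1` and `X2` given `X3`
    (hcd1 : ∀ᵐ x3 ∂(P.map X3),
      condDistrib X1 X3 P x3
        = gaussianReal ((σ1 * ρ13 / σ3) * x3) (Real.toNNReal (σ1 ^ 2 * (1 - ρ13 ^ 2))))
    (hcd2 : ∀ᵐ x3 ∂(P.map X3),
      condDistrib X2 X3 P x3
        = gaussianReal ((σ2 * ρ23 / σ3) * x3) (Real.toNNReal (σ2 ^ 2 * (1 - ρ23 ^ 2))))
    -- second moments: centered, with covariance `Cov(X1,X3) = ρ13·σ1·σ3`
    (hmean1 : ∫ ω, X1 ω ∂P = 0)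
    (hcov13 : ∫ ω, X1 ω * X3 ω ∂P = ρ13 * σ1 * σ3) :
    ((ρ13 = 0 ∨ ρ23 = 0) →
      KernelIndep (P.map X3) (condDistrib X1 X3 P) (condDistrib X2 X3 P)) ∧
    (ρ23 = 0 → ρ13 ≠ 0 →
      KernelIndep (P.map X3) (condDistrib X1 X3 P) (condDistrib X2 X3 P) ∧
        ¬ IndepFun X1 X3 P) := by
  have : IsProbabilityMeasure (P.map X3) := Measure.isProbabilityMeasure_map hX3.aemeasurable
  have hindep : (ρ13 = 0 ∨ ρ23 = 0) →
      KernelIndep (P.map X3) (condDistrib X1 X3 P) (condDistrib X2 X3 P) := by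
    rintro (h13 | h23)
    · refine kernelIndep_of_ae_eq_const_left (μ := gaussianReal 0 (σ1 ^ 2).toNNReal) ?_
      filter_upwards [hcd1] with x3 hx3
      simp [hx3, h13]
    · refine kernelIndep_of_ae_eq_const_right (ν := gaussianReal 0 (σ2 ^ 2).toNNReal) ?_
      filter_upwards [hcd2] with x3 hx3
      simp [hx3, h23]
  refine ⟨hindep, fun h23 h13 => ⟨hindep (Or.inr h23), ?_⟩⟩
  refine not_indepFun_of_integral_mul_ne_zero hX1.aestronglyMeasurable
    hX3.aestronglyMeasurable hmean1 ?_
  rw [hcov13]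
  exact mul_ne_zero (mul_ne_zero h13 hσ1.ne') hσ3.ne'

/-- For a trivariate centered Gaussian vector `(X1, X2, X3)` with correlations `ρ_{ij}`, the
kernels `P^{X1|X3}` and `P^{X2|X3}` are `P^{X3}`-independent if `ρ13 = 0` or `ρ23 = 0`;
in particular, if `ρ23 = 0` and `ρ13 ≠ 0` the kernels are `P^{X3}`-independent while `X1` and
`X3` are not independent. -/
theorem stmt19 {Ω : Type*} [MeasurableSpace Ω] (P : Measure Ω) [IsProbabilityMeasure P]
    (X1 X2 X3 : Ω → ℝ) (hX1 : Measurable X1) (hX2 : Measurable X2) (hX3 : Measurable X3)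
    (σ1 σ2 σ3 : ℝ) (hσ1 : 0 < σ1) (hσ2 : 0 < σ2) (hσ3 : 0 < σ3)
    (ρ13 ρ23 : ℝ) (hρ13 : |ρ13| ≤ 1) (hρ23 : |ρ23| ≤ 1)
    -- marginal law of `X3` is centered Gaussian with variance `σ3²`
    (hlaw3 : P.map X3 = gaussianReal 0 (Real.toNNReal (σ3 ^ 2)))
    -- Gaussian regular conditional distributions of `X1` and `X2` given `X3`
    (hcd1 : ∀ᵐ x3 ∂(P.map X3),
      condDistrib X1 X3 P x3
        = gaussianReal ((σ1 * ρ13 / σ3) * x3) (Real.toNNReal (σ1 ^ 2 * (1 - ρ13 ^ 2))))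
    (hcd2 : ∀ᵐ x3 ∂(P.map X3),
      condDistrib X2 X3 P x3
        = gaussianReal ((σ2 * ρ23 / σ3) * x3) (Real.toNNReal (σ2 ^ 2 * (1 - ρ23 ^ 2))))
    -- second moments: centered, with covariance `Cov(X1,X3) = ρ13·σ1·σ3`
    (hL2_1 : MemLp X1 2 P) (hL2_3 : MemLp X3 2 P)
    (hmean1 : ∫ ω, X1 ω ∂P = 0) (hmean3 : ∫ ω, X3 ω ∂P = 0)
    (hcov13 : ∫ ω, X1 ω * X3 ω ∂P = ρ13 * σ1 * σ3) :
    ((ρ13 = 0 ∨ ρ23 = 0) →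
      KernelIndep (P.map X3) (condDistrib X1 X3 P) (condDistrib X2 X3 P)) ∧
    (ρ23 = 0 → ρ13 ≠ 0 →
      KernelIndep (P.map X3) (condDistrib X1 X3 P) (condDistrib X2 X3 P) ∧
        ¬ IndepFun X1 X3 P) :=
  stmt19_general P X1 X2 X3 hX1 hX3 σ1 σ2 σ3 hσ1 hσ3 ρ13 ρ23 hcd1 hcd2 hmean1 hcov13
end
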